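/- (Theorem 1) Let G be a commutative group, q a prime, g, h : G with g^q = h^q = 1 and g not in the submonoid of powers of h. Let K, r : Fin n → ZMod q be participant P_i's shared keys and commitment randomness with the other n participants, let K_i = ∑ j, K j and c_i = ∏ j, g^{K j} * h^{r j} (so c_i = g^{K_i} * h^{∑ j, r j}). If P_i exhibits O_i : ZMod q and a witness α : ZMod q with c_i = g^{O_i} * h^{α}, then O_i = K_i, i.e. the ciphertext O_i encodes no message. -/
import Mathlib

private lemma pow_mod_q {G : Type*} [Monoid G] {x : G} {q : ℕ} (hx : x ^ q = 1)
    (m : ℕ) : x ^ m = x ^ (m % q) := by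
  conv_lhs => rw [← Nat.div_add_mod m q]
  rw [pow_add, pow_mul, hx, one_pow, one_mul]

private lemma pow_val_add {G : Type*} [Monoid G] {x : G} {q : ℕ} [NeZero q]
    (hx : x ^ q = 1) (a b : ZMod q) :
    x ^ (a + b).val = x ^ a.val * x ^ b.val := by
  rw [← pow_add, ZMod.val_add, ← pow_mod_q hx]

private lemma pow_val_mul {G : Type*} [Monoid G] {x : G} {q : ℕ} [NeZero q]
    (hx : x ^ q = 1) (a b : ZMod q) :
    x ^ (a * b).val = (x ^ a.val) ^ b.val := by
  rw [← pow_mul, ZMod.val_mul, ← pow_mod_q hx]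

/-- Theorem 1: if participant `P_i` exhibits `O_i` and a witness `α` with
`c_i = g^{O_i} h^{α}` where `c_i = ∏ j, g^{K j} h^{r j}` is his aggregated
Pedersen commitment, then `O_i = ∑ j, K j`, i.e. the ciphertext encodes
no message. -/
theorem dc_no_message {G : Type*} [CommGroup G] (q : ℕ)
    [Fact (Nat.Prime q)] (g h : G) (hg : g ^ q = 1) (hh : h ^ q = 1)
    (hgh : g ∉ Submonoid.powers h)
    (n : ℕ) (K r : Fin n → ZMod q)
    (Ki : ZMod q) (hKi : Ki = ∑ j, K j)
    (ci : G) (hci : ci = ∏ j, g ^ (K j).val * h ^ (r j).val)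
    (Oi α : ZMod q) (hwit : ci = g ^ Oi.val * h ^ α.val) :
    Oi = Ki := by
  -- collapse the product
  have hsum : ∀ (x : G), x ^ q = 1 → ∀ f : Fin n → ZMod q,
      (∏ j, x ^ (f j).val) = x ^ (∑ j, f j).val := by
    intro x hx f
    rw [Finset.prod_pow_eq_pow_sum, pow_mod_q hx]
    congr 1
    have : ((∑ j, (f j).val : ℕ) : ZMod q) = ∑ j, f j := by
      push_cast [ZMod.natCast_val, ZMod.cast_id]
      rfl
    rw [← this, ZMod.val_natCast]
  set R := ∑ j, r j with hR
  have hci' : ci = g ^ Ki.val * h ^ R.val := by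
    rw [hci, Finset.prod_mul_distrib, hsum g hg, hsum h hh, hKi]
  have heq : g ^ Ki.val * h ^ R.val = g ^ Oi.val * h ^ α.val := hci'.symm.trans hwit
  by_contra hne
  have hd : Ki - Oi ≠ 0 := sub_ne_zero_of_ne (Ne.symm hne)
  have key : g ^ (Ki - Oi).val = h ^ (α - R).val := by
    have e1 : g ^ (Ki - Oi).val * g ^ Oi.val = g ^ Ki.val := by
      rw [← pow_val_add hg, sub_add_cancel]
    have e2 : h ^ (α - R).val * h ^ R.val = h ^ α.val := by
      rw [← pow_val_add hh, sub_add_cancel]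
    have step : g ^ (Ki - Oi).val * (g ^ Oi.val * h ^ R.val)
        = h ^ (α - R).val * (g ^ Oi.val * h ^ R.val) := by
      calc g ^ (Ki - Oi).val * (g ^ Oi.val * h ^ R.val)
          = (g ^ (Ki - Oi).val * g ^ Oi.val) * h ^ R.val := by rw [mul_assoc]
        _ = g ^ Ki.val * h ^ R.val := by rw [e1]
        _ = g ^ Oi.val * h ^ α.val := heq
        _ = g ^ Oi.val * (h ^ (α - R).val * h ^ R.val) := by rw [e2]
        _ = h ^ (α - R).val * (g ^ Oi.val * h ^ R.val) := by
            rw [← mul_assoc, ← mul_assoc, mul_comm (g ^ Oi.val)]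
    exact mul_right_cancel step
  -- invert Ki - Oi (ZMod q is a field)
  have he : (Ki - Oi) * (Ki - Oi)⁻¹ = 1 := ZMod.mul_inv_of_unit _ (Ne.isUnit hd)
  have hone : (1 : ZMod q).val = 1 := ZMod.val_one q
  have : g = h ^ ((α - R).val * (Ki - Oi)⁻¹.val) := by
    calc g = g ^ ((1 : ZMod q).val) := by rw [hone, pow_one]
      _ = g ^ ((Ki - Oi) * (Ki - Oi)⁻¹).val := by rw [he]
      _ = (g ^ (Ki - Oi).val) ^ (Ki - Oi)⁻¹.val := pow_val_mul hg _ _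
      _ = (h ^ (α - R).val) ^ (Ki - Oi)⁻¹.val := by rw [key]
      _ = h ^ ((α - R).val * (Ki - Oi)⁻¹.val) := by rw [pow_mul]
  exact hgh ⟨_, this.symm⟩
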